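/- arXiv:1707.01569 — 3 statements merged into one kernel-verified Lean document; each statement's English description precedes it below -/
import Mathlib

section
/- Let f = h + conj(g) be a sense-preserving harmonic mapping in D with ||P_h|| < ∞. If ε₁, ε₂ belong to the closed unit disk with |ε₁| = |ε₂|, then ||P_{h+ε₁·conj(g)}|| = ||P_{h+ε₂·conj(g)}||. If |ε₁| ≠ |ε₂|, then | ||P_{h+ε₁·conj(g)}|| - ||P_{h+ε₂·conj(g)}|| | ≤ |ε₁| + |ε₂| < 2. -/
/-!
The dilatation of `h + conj (conj ε * g)` is `ε ω` with `ω = g' / h'`, so its pre-Schwarzian is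
`P_h - |ε|² / (1 - |ε|² |ω|²) · conj ω · ω'`. This depends on `ε` only through `|ε|`, which gives
the first claim. For the second, `ω` maps the disc into itself, so Schwarz–Pick gives
`(1 - |z|²) |ω'| ≤ 1 - |ω|²`, and with `a = |ε₁|`, `b = |ε₂|`, `t = |ω|` the weighted difference
of the two pre-Schwarzians is at most `|b² - a²| t (1 - t²) / ((1 - a² t²) (1 - b² t²)) ≤ a + b`.
-/

open Complex Metric

/-- Pre-Schwarzian derivative of an analytic function. -/
noncomputable def pd (F : ℂ → ℂ) (z : ℂ) : ℂ := deriv (deriv F) z / deriv F z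

/-- Dilatation of the harmonic mapping `h + conj g`. -/
noncomputable def dil (h g : ℂ → ℂ) (z : ℂ) : ℂ := deriv g z / deriv h z

/-- Pre-Schwarzian derivative of the harmonic mapping `h + conj g`. -/
noncomputable def PH (h g : ℂ → ℂ) (z : ℂ) : ℂ :=
  pd h z - (starRingEnd ℂ) (dil h g z) * deriv (dil h g) z / ((1 - ‖dil h g z‖ ^ 2 : ℝ) : ℂ)

/-- Pre-Schwarzian norm. -/
noncomputable def pnorm (P : ℂ → ℂ) : ℝ :=
  ⨆ z : Metric.ball (0 : ℂ) 1, (1 - ‖(z : ℂ)‖ ^ 2) * ‖P (z : ℂ)‖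

/-- The range whose boundedness expresses finiteness of the pre-Schwarzian norm. -/
def pbdd (P : ℂ → ℂ) : Prop :=
  BddAbove (Set.range fun z : Metric.ball (0 : ℂ) 1 => (1 - ‖(z : ℂ)‖ ^ 2) * ‖P (z : ℂ)‖)

/-- `h + conj g` is a sense-preserving harmonic mapping in the unit disk. -/
def SPH (h g : ℂ → ℂ) : Prop :=
  DifferentiableOn ℂ h (Metric.ball (0 : ℂ) 1) ∧
  DifferentiableOn ℂ g (Metric.ball (0 : ℂ) 1) ∧ g 0 = 0 ∧
  ∀ z ∈ Metric.ball (0 : ℂ) 1, ‖deriv g z‖ < ‖deriv h z‖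

open ComplexConjugate Set

noncomputable def mobius (c w : ℂ) : ℂ := (w + c) / (1 + conj c * w)

section Mobius

variable {c w : ℂ}

lemma norm_one_add_conj_mul_sq_sub_norm_add_sq (c w : ℂ) :
    ‖1 + conj c * w‖ ^ 2 - ‖w + c‖ ^ 2 = (1 - ‖c‖ ^ 2) * (1 - ‖w‖ ^ 2) := by
  simp only [← Complex.normSq_eq_norm_sq, Complex.normSq_apply, Complex.add_re, Complex.add_im,
    Complex.mul_re, Complex.mul_im, Complex.conj_re, Complex.conj_im, Complex.one_re,
    Complex.one_im]
  ring

lemma one_add_conj_mul_ne_zero (hc : ‖c‖ < 1) (hw : ‖w‖ < 1) : 1 + conj c * w ≠ 0 := by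
  have hlt : ‖conj c * w‖ < 1 := by
    rw [norm_mul, RCLike.norm_conj]
    exact mul_lt_one_of_nonneg_of_lt_one_right hc.le (norm_nonneg w) hw
  intro h
  rw [show conj c * w = -1 by linear_combination h] at hlt
  simp at hlt

lemma norm_mobius_lt_one (hc : ‖c‖ < 1) (hw : ‖w‖ < 1) : ‖mobius c w‖ < 1 := by
  have hden := norm_pos_iff.2 (one_add_conj_mul_ne_zero hc hw)
  rw [mobius, norm_div, div_lt_one hden]
  refine lt_of_pow_lt_pow_left₀ 2 hden.le ?_
  have := norm_one_add_conj_mul_sq_sub_norm_add_sq c w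
  have : 0 < (1 - ‖c‖ ^ 2) * (1 - ‖w‖ ^ 2) := by
    apply mul_pos <;> nlinarith [norm_nonneg c, norm_nonneg w]
  linarith

lemma mapsTo_mobius (hc : ‖c‖ < 1) : MapsTo (mobius c) (ball 0 1) (ball 0 1) := fun _ hw =>
  mem_ball_zero_iff.2 (norm_mobius_lt_one hc (mem_ball_zero_iff.1 hw))

lemma differentiableOn_mobius (hc : ‖c‖ < 1) : DifferentiableOn ℂ (mobius c) (ball 0 1) :=
  .div (by fun_prop) (by fun_prop) fun _ hw =>
    one_add_conj_mul_ne_zero hc (mem_ball_zero_iff.1 hw)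

lemma hasDerivAt_mobius (hc : ‖c‖ < 1) (hw : ‖w‖ < 1) :
    HasDerivAt (mobius c) ((1 - conj c * c) / (1 + conj c * w) ^ 2) w := by
  have hnum : HasDerivAt (fun w : ℂ => w + c) 1 w := (hasDerivAt_id w).add_const c
  have hden : HasDerivAt (fun w : ℂ => 1 + conj c * w) (conj c) w := by
    simpa using ((hasDerivAt_id w).const_mul (conj c)).const_add 1
  exact (hnum.div hden (one_add_conj_mul_ne_zero hc hw)).congr_deriv (by ring)

@[simp] lemma mobius_zero (c : ℂ) : mobius c 0 = c := by simp [mobius]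

@[simp] lemma mobius_neg_self (c : ℂ) : mobius (-c) c = 0 := by simp [mobius]

end Mobius

theorem schwarz_pick {f : ℂ → ℂ} (hd : DifferentiableOn ℂ f (ball 0 1))
    (hf : MapsTo f (ball 0 1) (ball 0 1)) {z : ℂ} (hz : z ∈ ball (0 : ℂ) 1) :
    (1 - ‖z‖ ^ 2) * ‖deriv f z‖ ≤ 1 - ‖f z‖ ^ 2 := by
  have hz1 : ‖z‖ < 1 := mem_ball_zero_iff.1 hz
  have ha1 : ‖f z‖ < 1 := mem_ball_zero_iff.1 (hf hz)
  have hna1 : ‖-f z‖ < 1 := by rwa [norm_neg]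
  have hz2 : 0 < 1 - ‖z‖ ^ 2 := by nlinarith [norm_nonneg z]
  have ha2 : 0 < 1 - ‖f z‖ ^ 2 := by nlinarith [norm_nonneg (f z)]
  -- the Schwarz lemma at the origin, for `f` conjugated by the automorphisms `0 ↦ z`, `f z ↦ 0`
  set F := mobius (-f z) ∘ f ∘ mobius z
  have hFd : DifferentiableOn ℂ F (ball 0 1) :=
    (differentiableOn_mobius hna1).comp (hd.comp (differentiableOn_mobius hz1) (mapsTo_mobius hz1))
      (hf.comp (mapsTo_mobius hz1))
  have hFm : MapsTo F (ball 0 1) (closedBall (F 0) 1) := by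
    simpa [F] using ((mapsTo_mobius hna1).comp (hf.comp (mapsTo_mobius hz1))).mono_right
      ball_subset_closedBall
  have hF' : HasDerivAt F
      (((1 - ‖f z‖ ^ 2 : ℝ) : ℂ)⁻¹ * (deriv f z * ((1 - ‖z‖ ^ 2 : ℝ) : ℂ))) 0 := by
    have hψ := hasDerivAt_mobius hz1 (w := 0) (by simp)
    have hfz := (hd.differentiableAt (isOpen_ball.mem_nhds hz)).hasDerivAt
    have hφ := hasDerivAt_mobius hna1 ha1
    have ha : ((1 - ‖f z‖ ^ 2 : ℝ) : ℂ) ≠ 0 := mod_cast ha2.ne'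
    refine (hφ.comp_of_eq 0 (hfz.comp_of_eq 0 hψ (mobius_zero z).symm) (by simp)).congr_deriv ?_
    rw [map_neg, neg_mul_neg, neg_mul, ← sub_eq_add_neg, Complex.conj_mul', Complex.conj_mul',
      mul_zero, add_zero, one_pow, div_one]
    push_cast at ha ⊢
    field_simp
  have hnorm := Complex.norm_deriv_le_one_of_mapsTo_ball hFd hFm one_pos
  rw [hF'.deriv, norm_mul, norm_mul, norm_inv, Complex.norm_real, Complex.norm_real,
    Real.norm_of_nonneg hz2.le, Real.norm_of_nonneg ha2.le, inv_mul_le_iff₀ ha2] at hnorm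
  linarith

lemma dil_const_mul (h g : ℂ → ℂ) (k : ℂ) :
    dil h (fun w => k * g w) = fun z => k * dil h g z := by
  funext z
  simp only [dil, deriv_const_mul_field, mul_div_assoc]

lemma PH_conj_mul (h g : ℂ → ℂ) (ε z : ℂ) :
    PH h (fun w => conj ε * g w) z = pd h z -
      ((‖ε‖ ^ 2 / (1 - ‖ε‖ ^ 2 * ‖dil h g z‖ ^ 2) : ℝ) : ℂ) *
        (conj (dil h g z) * deriv (dil h g) z) := by
  rw [PH, dil_const_mul, deriv_const_mul_field, norm_mul, RCLike.norm_conj, mul_pow, map_mul,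
    Complex.conj_conj]
  push_cast
  rw [← Complex.mul_conj']
  ring

lemma PH_conj_mul_sub_PH_conj_mul (h g : ℂ → ℂ) (ε₁ ε₂ z : ℂ) :
    PH h (fun w => conj ε₁ * g w) z - PH h (fun w => conj ε₂ * g w) z =
      ((‖ε₂‖ ^ 2 / (1 - ‖ε₂‖ ^ 2 * ‖dil h g z‖ ^ 2) -
        ‖ε₁‖ ^ 2 / (1 - ‖ε₁‖ ^ 2 * ‖dil h g z‖ ^ 2) : ℝ) : ℂ) *
        (conj (dil h g z) * deriv (dil h g) z) := by
  rw [PH_conj_mul, PH_conj_mul, Complex.ofReal_sub]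
  ring

namespace SPH

variable {h g : ℂ → ℂ} {z : ℂ}

lemma norm_dil_lt_one (hf : SPH h g) (hz : z ∈ ball (0 : ℂ) 1) : ‖dil h g z‖ < 1 := by
  have hlt := hf.2.2.2 z hz
  rw [dil, norm_div, div_lt_one ((norm_nonneg _).trans_lt hlt)]
  exact hlt

lemma differentiableOn_dil (hf : SPH h g) : DifferentiableOn ℂ (dil h g) (ball 0 1) := by
  obtain ⟨hh, hg, -, hlt⟩ := hf
  refine ((hg.analyticOnNhd isOpen_ball).deriv.differentiableOn).div
    ((hh.analyticOnNhd isOpen_ball).deriv.differentiableOn) fun z hz => ?_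
  exact norm_pos_iff.1 ((norm_nonneg _).trans_lt (hlt z hz))

lemma schwarz_pick_dil (hf : SPH h g) (hz : z ∈ ball (0 : ℂ) 1) :
    (1 - ‖z‖ ^ 2) * ‖deriv (dil h g) z‖ ≤ 1 - ‖dil h g z‖ ^ 2 :=
  schwarz_pick hf.differentiableOn_dil (fun _ hw => mem_ball_zero_iff.2 (hf.norm_dil_lt_one hw)) hz

end SPH

lemma abs_sub_mul_mul_one_sub_sq_le {a b t : ℝ} (ha : 0 ≤ a) (ha1 : a ≤ 1) (hb : 0 ≤ b)
    (hb1 : b ≤ 1) (ht : 0 ≤ t) (ht1 : t ≤ 1) :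
    |b - a| * t * (1 - t ^ 2) ≤ (1 - a ^ 2 * t ^ 2) * (1 - b ^ 2 * t ^ 2) := by
  wlog hab : a ≤ b generalizing a b
  · rw [abs_sub_comm, mul_comm (1 - a ^ 2 * t ^ 2)]
    exact this hb hb1 ha ha1 (le_of_not_ge hab)
  rw [abs_of_nonneg (sub_nonneg.2 hab)]
  -- `(b - a) t ≤ (1 - a) t` and `1 - a²t² - (1 - a) t = (1 - t) + a t (1 - a t)`
  have hleft : (b - a) * t ≤ 1 - a ^ 2 * t ^ 2 := by
    nlinarith [mul_nonneg (mul_nonneg ha ht) (sub_nonneg.2 (mul_le_one₀ ha1 ht ht1)),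
      mul_le_mul_of_nonneg_right hb1 ht]
  have hright : 1 - t ^ 2 ≤ 1 - b ^ 2 * t ^ 2 := by
    nlinarith [mul_le_mul_of_nonneg_right (pow_le_one₀ hb hb1 : b ^ 2 ≤ 1) (sq_nonneg t)]
  exact mul_le_mul hleft hright (by nlinarith) (by nlinarith [mul_le_one₀ ha1 ht ht1, mul_nonneg ha ht])

lemma abs_sq_div_sub_sq_div_mul_le {a b t : ℝ} (ha : 0 ≤ a) (ha1 : a ≤ 1) (hb : 0 ≤ b)
    (hb1 : b ≤ 1) (ht : 0 ≤ t) (ht1 : t < 1) :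
    |b ^ 2 / (1 - b ^ 2 * t ^ 2) - a ^ 2 / (1 - a ^ 2 * t ^ 2)| * (t * (1 - t ^ 2)) ≤ a + b := by
  have hDa : 0 < 1 - a ^ 2 * t ^ 2 := by
    nlinarith [mul_lt_one_of_nonneg_of_lt_one_right ha1 ht ht1, mul_nonneg ha ht]
  have hDb : 0 < 1 - b ^ 2 * t ^ 2 := by
    nlinarith [mul_lt_one_of_nonneg_of_lt_one_right hb1 ht ht1, mul_nonneg hb ht]
  have hD := mul_pos hDa hDb
  rw [show b ^ 2 / (1 - b ^ 2 * t ^ 2) - a ^ 2 / (1 - a ^ 2 * t ^ 2) =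
      (a + b) * (b - a) / ((1 - a ^ 2 * t ^ 2) * (1 - b ^ 2 * t ^ 2)) by rw [div_sub_div _ _ hDb.ne' hDa.ne']; ring,
    abs_div, abs_mul, abs_of_nonneg (add_nonneg ha hb), abs_of_pos hD, div_mul_eq_mul_div,
    div_le_iff₀ hD, mul_assoc, ← mul_assoc |b - a|]
  exact mul_le_mul_of_nonneg_left (abs_sub_mul_mul_one_sub_sq_le ha ha1 hb hb1 ht ht1.le)
    (add_nonneg ha hb)

lemma SPH.weighted_norm_PH_conj_mul_sub_le {h g : ℂ → ℂ} (hf : SPH h g) {z : ℂ}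
    (hz : z ∈ ball (0 : ℂ) 1) {ε₁ ε₂ : ℂ} (hε₁ : ‖ε₁‖ ≤ 1) (hε₂ : ‖ε₂‖ ≤ 1) :
    (1 - ‖z‖ ^ 2) * ‖PH h (fun w => conj ε₁ * g w) z - PH h (fun w => conj ε₂ * g w) z‖ ≤
      ‖ε₁‖ + ‖ε₂‖ := by
  rw [PH_conj_mul_sub_PH_conj_mul, norm_mul, Complex.norm_real, Real.norm_eq_abs, norm_mul,
    RCLike.norm_conj]
  set t := ‖dil h g z‖
  calc (1 - ‖z‖ ^ 2) * (|‖ε₂‖ ^ 2 / (1 - ‖ε₂‖ ^ 2 * t ^ 2) - ‖ε₁‖ ^ 2 / (1 - ‖ε₁‖ ^ 2 * t ^ 2)| *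
        (t * ‖deriv (dil h g) z‖))
      = |‖ε₂‖ ^ 2 / (1 - ‖ε₂‖ ^ 2 * t ^ 2) - ‖ε₁‖ ^ 2 / (1 - ‖ε₁‖ ^ 2 * t ^ 2)| *
        (t * ((1 - ‖z‖ ^ 2) * ‖deriv (dil h g) z‖)) := by ring
    _ ≤ |‖ε₂‖ ^ 2 / (1 - ‖ε₂‖ ^ 2 * t ^ 2) - ‖ε₁‖ ^ 2 / (1 - ‖ε₁‖ ^ 2 * t ^ 2)| *
        (t * (1 - t ^ 2)) := by gcongr; exact hf.schwarz_pick_dil hz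
    _ ≤ ‖ε₁‖ + ‖ε₂‖ := abs_sq_div_sub_sq_div_mul_le (norm_nonneg _) hε₁ (norm_nonneg _) hε₂
        (norm_nonneg _) (hf.norm_dil_lt_one hz)

section PreSchwarzianNorm

variable {P Q : ℂ → ℂ} {C : ℝ}

lemma weighted_norm_le_add_of_weighted_norm_sub_le {z : ℂ} (hz : z ∈ ball (0 : ℂ) 1)
    (hPQ : (1 - ‖z‖ ^ 2) * ‖P z - Q z‖ ≤ C) :
    (1 - ‖z‖ ^ 2) * ‖P z‖ ≤ (1 - ‖z‖ ^ 2) * ‖Q z‖ + C := by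
  have hz2 : 0 ≤ 1 - ‖z‖ ^ 2 := by nlinarith [norm_nonneg z, mem_ball_zero_iff.1 hz]
  have := mul_le_mul_of_nonneg_left (norm_le_norm_add_norm_sub' (P z) (Q z)) hz2
  linarith

lemma pbdd_of_weighted_norm_sub_le (hQ : pbdd Q)
    (hPQ : ∀ z ∈ ball (0 : ℂ) 1, (1 - ‖z‖ ^ 2) * ‖P z - Q z‖ ≤ C) : pbdd P := by
  obtain ⟨M, hM⟩ := hQ
  refine ⟨M + C, ?_⟩
  rintro _ ⟨⟨z, hz⟩, rfl⟩
  have := weighted_norm_le_add_of_weighted_norm_sub_le hz (hPQ z hz)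
  have := hM ⟨⟨z, hz⟩, rfl⟩
  dsimp only at *
  linarith

lemma pnorm_le_add_of_weighted_norm_sub_le (hQ : pbdd Q)
    (hPQ : ∀ z ∈ ball (0 : ℂ) 1, (1 - ‖z‖ ^ 2) * ‖P z - Q z‖ ≤ C) : pnorm P ≤ pnorm Q + C := by
  have : Nonempty (ball (0 : ℂ) 1) := ⟨⟨0, mem_ball_self one_pos⟩⟩
  refine ciSup_le fun z => ?_
  have := weighted_norm_le_add_of_weighted_norm_sub_le z.2 (hPQ z z.2)
  have : _ ≤ pnorm Q := le_ciSup hQ z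
  linarith

lemma abs_pnorm_sub_le_of_weighted_norm_sub_le (hQ : pbdd Q)
    (hPQ : ∀ z ∈ ball (0 : ℂ) 1, (1 - ‖z‖ ^ 2) * ‖P z - Q z‖ ≤ C) : |pnorm P - pnorm Q| ≤ C := by
  have hQP : ∀ z ∈ ball (0 : ℂ) 1, (1 - ‖z‖ ^ 2) * ‖Q z - P z‖ ≤ C := fun z hz => by
    rw [norm_sub_rev]; exact hPQ z hz
  have h₁ := pnorm_le_add_of_weighted_norm_sub_le hQ hPQ
  have h₂ := pnorm_le_add_of_weighted_norm_sub_le (pbdd_of_weighted_norm_sub_le hQ hPQ) hQP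
  rw [abs_sub_le_iff]
  constructor <;> linarith

end PreSchwarzianNorm

lemma SPH.pbdd_PH_conj_mul {h g : ℂ → ℂ} (hf : SPH h g) (hfin : pbdd (pd h)) {ε : ℂ}
    (hε : ‖ε‖ ≤ 1) : pbdd (PH h (fun w => conj ε * g w)) := by
  have hPH_zero : PH h (fun w => conj 0 * g w) = pd h := funext fun z => by
    rw [PH_conj_mul]; simp
  refine pbdd_of_weighted_norm_sub_le (C := ‖ε‖) hfin fun z hz => ?_
  have := hf.weighted_norm_PH_conj_mul_sub_le hz hε (ε₂ := 0) (by simp)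
  rwa [hPH_zero, norm_zero, add_zero] at this

theorem stmt3 (h g : ℂ → ℂ) (hf : SPH h g) (hfin : pbdd (pd h))
    (ε₁ ε₂ : ℂ) (hε₁ : ‖ε₁‖ ≤ 1) (hε₂ : ‖ε₂‖ ≤ 1) :
    (‖ε₁‖ = ‖ε₂‖ →
      pnorm (PH h (fun w => (starRingEnd ℂ) ε₁ * g w)) =
        pnorm (PH h (fun w => (starRingEnd ℂ) ε₂ * g w))) ∧
    (‖ε₁‖ ≠ ‖ε₂‖ →
      |pnorm (PH h (fun w => (starRingEnd ℂ) ε₁ * g w)) -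
          pnorm (PH h (fun w => (starRingEnd ℂ) ε₂ * g w))| ≤ ‖ε₁‖ + ‖ε₂‖ ∧
        ‖ε₁‖ + ‖ε₂‖ < 2) := by
  refine ⟨fun hnorm => ?_, fun hnorm => ⟨?_, ?_⟩⟩
  · congr 1
    funext z
    rw [PH_conj_mul, PH_conj_mul, hnorm]
  · exact abs_pnorm_sub_le_of_weighted_norm_sub_le (hf.pbdd_PH_conj_mul hfin hε₂)
      fun z hz => hf.weighted_norm_PH_conj_mul_sub_le hz hε₁ hε₂
  · rcases hnorm.lt_or_gt with hlt | hlt <;> linarith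
end

section
/- Let H_{a,b}(z) = ∫₀^z (1+t)^a/(1-t)^b dt for real a, b. Then the pre-Schwarzian norm of H_{a,b} equals 2·max{|a|, |b|}, i.e. sup_{z∈D}(1-|z|²)·|(a+b+(b-a)z)/(1-z²)| = |a+b| + |b-a|. -/
open Complex Metric

/-! Since `1 - ‖z‖² ≤ ‖1 - z²‖`, the weighted quantity is at most `‖α + β z‖ ≤ |α| + |β|`.
On the real diameter the weight cancels the denominator exactly, leaving `|α + β x|`, which tends
to `|α ± β|` as `x → ±1`; and `max |α + β| |α - β| = |α| + |β|`. With `α = a + b`, `β = b - a`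
the two endpoint values are `2|b|` and `2|a|`. -/

open Set

lemma max_abs_add_abs_sub (α β : ℝ) : max |α + β| |α - β| = |α| + |β| := by
  rcases le_total 0 α with hα | hα <;> rcases le_total 0 β with hβ | hβ <;>
    simp only [abs_of_nonneg, abs_of_nonpos, *] <;> grind

lemma one_sub_norm_sq_le_norm_one_sub_sq {R : Type*} [NormedRing R] [NormOneClass R] (z : R) :
    1 - ‖z‖ ^ 2 ≤ ‖1 - z ^ 2‖ := by
  calc 1 - ‖z‖ ^ 2 ≤ ‖(1 : R)‖ - ‖z ^ 2‖ := by rw [norm_one]; gcongr; exact norm_pow_le z 2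
    _ ≤ ‖1 - z ^ 2‖ := norm_sub_norm_le _ _

lemma one_sub_norm_sq_mul_norm_div_one_sub_sq_le {𝕜 : Type*} [NormedField 𝕜] (z w : 𝕜) :
    (1 - ‖z‖ ^ 2) * ‖w / (1 - z ^ 2)‖ ≤ ‖w‖ := by
  rw [norm_div, mul_div_left_comm]
  rcases le_or_gt (1 - ‖z‖ ^ 2) 0 with hz | hz
  · exact (mul_nonpos_of_nonneg_of_nonpos (norm_nonneg w)
      (div_nonpos_of_nonpos_of_nonneg hz (norm_nonneg _))).trans (norm_nonneg w)
  · have hle := one_sub_norm_sq_le_norm_one_sub_sq z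
    exact mul_le_of_le_one_right (norm_nonneg w) ((div_le_one (hz.trans_le hle)).mpr hle)

lemma one_sub_norm_sq_mul_norm_div_one_sub_sq_ofReal {x : ℝ} (hx : |x| < 1) (w : ℂ) :
    (1 - ‖(x : ℂ)‖ ^ 2) * ‖w / (1 - (x : ℂ) ^ 2)‖ = ‖w‖ := by
  have hpos : 0 < 1 - x ^ 2 := by nlinarith [sq_abs x, abs_nonneg x]
  rw [← ofReal_pow, ← ofReal_one, ← ofReal_sub, norm_div, norm_real, norm_real, Real.norm_eq_abs,
    Real.norm_eq_abs, sq_abs, abs_of_pos hpos, mul_div_cancel₀ _ hpos.ne']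

lemma norm_add_mul_le_of_norm_le_one {R : Type*} [SeminormedRing R] {z : R} (hz : ‖z‖ ≤ 1)
    (α β : R) : ‖α + β * z‖ ≤ ‖α‖ + ‖β‖ :=
  (norm_add_le _ _).trans (add_le_add_right ((norm_mul_le _ _).trans
    (mul_le_of_le_one_right (norm_nonneg β) hz)) _)

theorem iSup_ball_one_sub_norm_sq_mul_norm_affine_div (α β : ℝ) :
    ⨆ z : ball (0 : ℂ) 1, (1 - ‖(z : ℂ)‖ ^ 2) * ‖((α : ℂ) + β * z) / (1 - (z : ℂ) ^ 2)‖ =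
      |α| + |β| := by
  set F : ball (0 : ℂ) 1 → ℝ := fun z =>
    (1 - ‖(z : ℂ)‖ ^ 2) * ‖((α : ℂ) + β * z) / (1 - (z : ℂ) ^ 2)‖
  have hF_le : ∀ z, F z ≤ |α| + |β| := fun z =>
    (one_sub_norm_sq_mul_norm_div_one_sub_sq_le _ _).trans <|
      (norm_add_mul_le_of_norm_le_one (mem_ball_zero_iff.mp z.2).le _ _).trans_eq (by simp)
  have hF_bdd : BddAbove (range F) := ⟨_, forall_mem_range.mpr hF_le⟩
  have h_diam : ∀ x ∈ Icc (-1 : ℝ) 1, |α + β * x| ≤ ⨆ z, F z := by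
    have hclosed : IsClosed {x : ℝ | |α + β * x| ≤ ⨆ z, F z} :=
      isClosed_le (by fun_prop) continuous_const
    rw [← closure_Ioo (by norm_num : (-1 : ℝ) ≠ 1)]
    refine closure_minimal (fun x hx => ?_) hclosed
    have hx1 : |x| < 1 := abs_lt.mpr hx
    have hmem : (x : ℂ) ∈ ball (0 : ℂ) 1 := by simpa [mem_ball_zero_iff] using hx1
    calc |α + β * x| = F ⟨x, hmem⟩ := by
          simp only [F, one_sub_norm_sq_mul_norm_div_one_sub_sq_ofReal hx1]
          norm_cast
      _ ≤ ⨆ z, F z := le_ciSup hF_bdd _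
  refine le_antisymm (ciSup_le hF_le) ?_
  rw [← max_abs_add_abs_sub]
  exact max_le (by simpa using h_diam 1 (by norm_num))
    (by simpa [← sub_eq_add_neg] using h_diam (-1) (by norm_num))

theorem two_mul_max_abs_abs (a b : ℝ) : 2 * max |a| |b| = |a + b| + |b - a| := by
  rw [← max_abs_add_abs_sub, show a + b + (b - a) = 2 * b by ring,
    show a + b - (b - a) = 2 * a by ring, abs_mul, abs_mul, abs_two, max_comm,
    mul_max_of_nonneg _ _ zero_le_two]

theorem stmt6 (a b : ℝ) :
    (⨆ z : Metric.ball (0 : ℂ) 1,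
        (1 - ‖(z : ℂ)‖ ^ 2) *
          ‖(((a : ℂ) + (b : ℂ) + ((b : ℂ) - (a : ℂ)) * (z : ℂ)) / (1 - (z : ℂ) ^ 2))‖) =
      2 * max |a| |b| ∧ 2 * max |a| |b| = |a + b| + |b - a| := by
  have h := iSup_ball_one_sub_norm_sq_mul_norm_affine_div (a + b) (b - a)
  push_cast at h
  exact ⟨h.trans (two_mul_max_abs_abs a b).symm, two_mul_max_abs_abs a b⟩
end

section
/- For real a and θ, the harmonic mapping F_{a,a,θ} = H_a + conj(e^{iθ}(H_{a+1,a} - H_a)), where H_{a,b}(z) = ∫₀^z (1+t)^a/(1-t)^b dt and H_a = H_{a,a}, has the pre-Schwarzian derivative P_{F_{a,a,θ}}(z) = 2a/(1-z²) - conj(z)/(1-|z|²), and its pre-Schwarzian norm equals 2|a| + 1. -/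
/-!
The analytic part has `h' = φ` with `φ(z) = ((1 + z) / (1 - z)) ^ a`, whose logarithmic derivative
is `a / (1 + z) + a / (1 - z) = 2a / (1 - z²)`, and the dilatation is the rotation `e^{iθ} z`, whose
contribution `conj(e^{iθ} z) e^{iθ} / (1 - |z|²)` is `conj z / (1 - |z|²)`. For the norm, the
triangle inequality and `1 - |z|² ≤ |1 - z²|` bound the weighted modulus by `2|a| + |z|`, while
on the real diameter it equals `|2a - t|`, which tends to `2|a| + 1` as `t → -sign(a)`.
-/

open Complex Metric

open Filter Topology

lemma one_sub_mem_slitPlane_of_norm_lt_one {z : ℂ} (hz : ‖z‖ < 1) : 1 - z ∈ slitPlane := by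
  simpa [← sub_eq_add_neg] using mem_slitPlane_of_norm_lt_one (z := -z) (by rwa [norm_neg])

lemma hasDerivAt_one_add_cpow_div_one_sub_cpow (c : ℂ) {z : ℂ}
    (h₁ : 1 + z ∈ slitPlane) (h₂ : 1 - z ∈ slitPlane) :
    HasDerivAt (fun w => (1 + w) ^ c / (1 - w) ^ c)
      ((1 + z) ^ c / (1 - z) ^ c * (2 * c / (1 - z ^ 2))) z := by
  have hnum := ((hasDerivAt_id' z).const_add 1).cpow_const (c := c) h₁
  have hden := ((hasDerivAt_id' z).const_sub 1).cpow_const (c := c) h₂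
  have hden_ne : (1 - z) ^ c ≠ 0 := fun h0 =>
    slitPlane_ne_zero h₂ ((cpow_eq_zero_iff _ _).1 h0).1
  refine (hnum.div hden hden_ne).congr_deriv ?_
  rw [cpow_sub _ _ (slitPlane_ne_zero h₁), cpow_sub _ _ (slitPlane_ne_zero h₂), cpow_one, cpow_one]
  have h₃ : (1 : ℂ) - z ^ 2 = (1 + z) * (1 - z) := by ring
  rw [h₃]
  field_simp [slitPlane_ne_zero h₁, slitPlane_ne_zero h₂]
  ring

lemma PH_eq_of_hasDerivAt {h g φ ω : ℂ → ℂ} {z φ' ω' : ℂ}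
    (hh : ∀ᶠ w in 𝓝 z, HasDerivAt h (φ w) w) (hg : ∀ᶠ w in 𝓝 z, HasDerivAt g (ω w * φ w) w)
    (hφ : ∀ᶠ w in 𝓝 z, φ w ≠ 0) (hφ' : HasDerivAt φ φ' z) (hω' : HasDerivAt ω ω' z) :
    PH h g z = φ' / φ z - starRingEnd ℂ (ω z) * ω' / ((1 - ‖ω z‖ ^ 2 : ℝ) : ℂ) := by
  have hdh : deriv h =ᶠ[𝓝 z] φ := hh.mono fun w hw => hw.deriv
  have hdil : dil h g =ᶠ[𝓝 z] ω := (hh.and (hg.and hφ)).mono fun w ⟨hhw, hgw, hφw⟩ => by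
    rw [dil, hhw.deriv, hgw.deriv, mul_div_cancel_right₀ _ hφw]
  rw [PH, pd, hdh.deriv_eq, hφ'.deriv, hdh.eq_of_nhds, hdil.deriv_eq, hω'.deriv, hdil.eq_of_nhds]

noncomputable def preSchwarzianF (a : ℝ) (z : ℂ) : ℂ :=
  2 * (a : ℂ) / (1 - z ^ 2) - starRingEnd ℂ z / ((1 - ‖z‖ ^ 2 : ℝ) : ℂ)

lemma PH_eq_preSchwarzianF (a θ : ℝ) {h g : ℂ → ℂ}
    (hh : ∀ z ∈ ball (0 : ℂ) 1, HasDerivAt h ((1 + z) ^ (a : ℂ) / (1 - z) ^ (a : ℂ)) z)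
    (hg : ∀ z ∈ ball (0 : ℂ) 1,
      HasDerivAt g (exp (θ * I) * z * ((1 + z) ^ (a : ℂ) / (1 - z) ^ (a : ℂ))) z)
    {z : ℂ} (hz : z ∈ ball (0 : ℂ) 1) : PH h g z = preSchwarzianF a z := by
  have hball : ball (0 : ℂ) 1 ∈ 𝓝 z := isOpen_ball.mem_nhds hz
  have hslit : ∀ w ∈ ball (0 : ℂ) 1, 1 + w ∈ slitPlane ∧ 1 - w ∈ slitPlane := fun w hw =>
    have hw : ‖w‖ < 1 := mem_ball_zero_iff.1 hw
    ⟨mem_slitPlane_of_norm_lt_one hw, one_sub_mem_slitPlane_of_norm_lt_one hw⟩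
  have hφ : ∀ w ∈ ball (0 : ℂ) 1, (1 + w) ^ (a : ℂ) / (1 - w) ^ (a : ℂ) ≠ 0 := fun w hw =>
    div_ne_zero (fun h0 => slitPlane_ne_zero (hslit w hw).1 ((cpow_eq_zero_iff _ _).1 h0).1)
      (fun h0 => slitPlane_ne_zero (hslit w hw).2 ((cpow_eq_zero_iff _ _).1 h0).1)
  have hrot : ‖exp (θ * I)‖ = 1 := norm_exp_ofReal_mul_I θ
  rw [PH_eq_of_hasDerivAt (ω := fun w => exp (θ * I) * w) (eventually_of_mem hball hh)
    (eventually_of_mem hball hg) (eventually_of_mem hball hφ)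
    (hasDerivAt_one_add_cpow_div_one_sub_cpow a (hslit z hz).1 (hslit z hz).2)
    ((hasDerivAt_id' z).const_mul _), mul_div_cancel_left₀ _ (hφ z hz), norm_mul, hrot, one_mul,
    mul_one, map_mul, mul_right_comm, conj_mul', hrot, preSchwarzianF]
  simp

lemma pnorm_congr {P Q : ℂ → ℂ} (hPQ : ∀ z ∈ ball (0 : ℂ) 1, P z = Q z) : pnorm P = pnorm Q := by
  simp only [pnorm]
  exact iSup_congr fun z => by rw [hPQ z z.2]

lemma mul_norm_preSchwarzianF_le (a : ℝ) {z : ℂ} (hz : ‖z‖ < 1) :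
    (1 - ‖z‖ ^ 2) * ‖preSchwarzianF a z‖ ≤ 2 * |a| + ‖z‖ := by
  have hd : 0 < 1 - ‖z‖ ^ 2 := by nlinarith [norm_nonneg z]
  have hsq : 1 - ‖z‖ ^ 2 ≤ ‖1 - z ^ 2‖ := by
    have := norm_sub_norm_le (1 : ℂ) (z ^ 2)
    rwa [norm_one, norm_pow] at this
  have hsq_pos : 0 < ‖1 - z ^ 2‖ := hd.trans_le hsq
  calc (1 - ‖z‖ ^ 2) * ‖preSchwarzianF a z‖
      ≤ (1 - ‖z‖ ^ 2) * (2 * |a| / ‖1 - z ^ 2‖ + ‖z‖ / (1 - ‖z‖ ^ 2)) := by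
        gcongr
        refine (norm_sub_le _ _).trans_eq ?_
        rw [norm_div, norm_div, norm_mul, RCLike.norm_conj, norm_real, norm_real,
          Real.norm_of_nonneg hd.le, Real.norm_eq_abs]
        norm_num
    _ = 2 * |a| * ((1 - ‖z‖ ^ 2) / ‖1 - z ^ 2‖) + ‖z‖ := by field_simp
    _ ≤ 2 * |a| * 1 + ‖z‖ := by
        gcongr
        exact (div_le_one hsq_pos).2 hsq
    _ = 2 * |a| + ‖z‖ := by ring

lemma mul_norm_preSchwarzianF_ofReal (a : ℝ) {t : ℝ} (ht : |t| < 1) :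
    (1 - ‖(t : ℂ)‖ ^ 2) * ‖preSchwarzianF a t‖ = |2 * a - t| := by
  have hd : 1 - t ^ 2 ≠ 0 := by nlinarith [abs_nonneg t, sq_abs t]
  have hval : preSchwarzianF a t = (((2 * a - t) / (1 - t ^ 2) : ℝ) : ℂ) := by
    rw [preSchwarzianF, norm_real, Real.norm_eq_abs, sq_abs, conj_ofReal]
    push_cast
    field_simp [show (1 : ℂ) - (t : ℂ) ^ 2 ≠ 0 by exact_mod_cast hd]
  rw [hval, norm_real, norm_real, Real.norm_eq_abs, Real.norm_eq_abs, sq_abs, abs_div,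
    abs_of_pos (by nlinarith [abs_nonneg t, sq_abs t] : 0 < 1 - t ^ 2), mul_div_cancel₀ _ hd]

lemma exists_abs_lt_one_lt_abs_two_mul_sub (a : ℝ) {w : ℝ} (hw : w < 2 * |a| + 1) :
    ∃ t : ℝ, |t| < 1 ∧ w < |2 * a - t| := by
  obtain ⟨r, hwr, hr1⟩ := exists_between
    (show max (w - 2 * |a|) 0 < 1 from max_lt (by linarith) one_pos)
  have hr0 : 0 < r := (le_max_right _ _).trans_lt hwr
  have hwr' : w < 2 * |a| + r := by linarith [le_max_left (w - 2 * |a|) 0]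
  rcases le_or_gt 0 a with ha | ha
  · refine ⟨-r, by rwa [abs_neg, abs_of_pos hr0], ?_⟩
    rwa [sub_neg_eq_add, abs_of_nonneg (by linarith), ← abs_of_nonneg ha]
  · refine ⟨r, by rwa [abs_of_pos hr0], ?_⟩
    rw [abs_of_neg (by linarith)]
    linarith [abs_of_neg ha]

lemma pnorm_preSchwarzianF (a : ℝ) : pnorm (preSchwarzianF a) = 2 * |a| + 1 := by
  have : Nonempty (ball (0 : ℂ) 1) := ⟨⟨0, mem_ball_self one_pos⟩⟩
  refine ciSup_eq_of_forall_le_of_forall_lt_exists_gt (fun z => ?_) (fun w hw => ?_)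
  · have hz : ‖(z : ℂ)‖ < 1 := mem_ball_zero_iff.1 z.2
    linarith [mul_norm_preSchwarzianF_le a hz]
  · obtain ⟨t, ht, hwt⟩ := exists_abs_lt_one_lt_abs_two_mul_sub a hw
    refine ⟨⟨t, by rwa [mem_ball_zero_iff, norm_real]⟩, ?_⟩
    rwa [mul_norm_preSchwarzianF_ofReal a ht]

theorem stmt9 (a θ : ℝ) (h g : ℂ → ℂ)
    (hh : ∀ z ∈ Metric.ball (0 : ℂ) 1,
        HasDerivAt h ((1 + z) ^ (a : ℂ) / (1 - z) ^ (a : ℂ)) z)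
    (hg : ∀ z ∈ Metric.ball (0 : ℂ) 1,
        HasDerivAt g (Complex.exp (θ * Complex.I) * z *
          ((1 + z) ^ (a : ℂ) / (1 - z) ^ (a : ℂ))) z) :
    (∀ z ∈ Metric.ball (0 : ℂ) 1,
        PH h g z = 2 * (a : ℂ) / (1 - z ^ 2) -
          (starRingEnd ℂ) z / ((1 - ‖z‖ ^ 2 : ℝ) : ℂ)) ∧
    pnorm (PH h g) = 2 * |a| + 1 := by
  have hPH : ∀ z ∈ ball (0 : ℂ) 1, PH h g z = preSchwarzianF a z := fun _ hz =>
    PH_eq_preSchwarzianF a θ hh hg hz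
  exact ⟨hPH, (pnorm_congr hPH).trans (pnorm_preSchwarzianF a)⟩
end
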